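/- Let S : ℝ ⇒ ℝⁿ be a smooth sweeping process and (t,x) ∈ 𝒮. If either (a) 𝒮 is a C¹ submanifold of ℝ^{n+1} (without boundary), or (b) ‖D*S(t,x)|⁺ > 0, then ‖D*S(t,x)|⁺ = ‖D*S(t,x)‖⁺. -/

import Mathlib

open Set Metric Filter MeasureTheory
open scoped ENNReal RealInnerProductSpace Topology Pointwise

section Preliminaries

variable {E : Type*} [NormedAddCommGroup E] [InnerProductSpace ℝ E]

/-- The graph `𝒮 = {(t,x) : x ∈ S t}` of a multivalued map `S : ℝ ⇒ E`. -/
def sgraph (S : ℝ → Set E) : Set (ℝ × E) := {p | p.2 ∈ S p.1}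

/-- The effective domain of a multivalued map. -/
def sdom (S : ℝ → Set E) : Set ℝ := {t | (S t).Nonempty}

/-- The euclidean pairing on `ℝ × E`. -/
def pinner (p q : ℝ × E) : ℝ := p.1 * q.1 + ⟪p.2, q.2⟫

/-- Fréchet normal cone of a set `C ⊆ E` at `x`. -/
def frechetNC (C : Set E) (x : E) : Set E :=
  {v | ∀ ε : ℝ, 0 < ε → ∃ δ : ℝ, 0 < δ ∧
    ∀ y ∈ C, ‖y - x‖ < δ → ⟪v, y - x⟫ ≤ ε * ‖y - x‖}

/-- Limiting (Mordukhovich) normal cone of a set `C ⊆ E` at `x`. -/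
def limitingNC (C : Set E) (x : E) : Set E :=
  {v | ∃ xs vs : ℕ → E, (∀ i, xs i ∈ C) ∧ (∀ i, vs i ∈ frechetNC C (xs i)) ∧
    Tendsto xs atTop (𝓝 x) ∧ Tendsto vs atTop (𝓝 v)}

/-- Fréchet normal cone of a set `C ⊆ ℝ × E` at `z` (w.r.t. the euclidean pairing). -/
def frechetNCP (C : Set (ℝ × E)) (z : ℝ × E) : Set (ℝ × E) :=
  {v | ∀ ε : ℝ, 0 < ε → ∃ δ : ℝ, 0 < δ ∧
    ∀ y ∈ C, ‖y - z‖ < δ → pinner v (y - z) ≤ ε * ‖y - z‖}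

/-- Limiting normal cone of a set `C ⊆ ℝ × E` at `z`. -/
def limitingNCP (C : Set (ℝ × E)) (z : ℝ × E) : Set (ℝ × E) :=
  {v | ∃ zs vs : ℕ → ℝ × E, (∀ i, zs i ∈ C) ∧ (∀ i, vs i ∈ frechetNCP C (zs i)) ∧
    Tendsto zs atTop (𝓝 z) ∧ Tendsto vs atTop (𝓝 v)}

/-- The (limiting) coderivative `D*S(t,x)(u) = {a : (a,-u) ∈ N_𝒮(t,x)}`. -/
def coderiv (S : ℝ → Set E) (t : ℝ) (x : E) (u : E) : Set ℝ :=
  {a | (a, -u) ∈ limitingNCP (sgraph S) (t, x)}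

/-- Asymmetric (oriented) modulus `‖D*S(t,x)|⁺ = sup {a⁺ : a ∈ D*S(t,x)(u), ‖u‖ ≤ 1}`
(with `sup ∅ = 0`). -/
noncomputable def asymMod (S : ℝ → Set E) (t : ℝ) (x : E) : ℝ≥0∞ :=
  ⨆ (u : E) (_ : ‖u‖ ≤ 1) (a : ℝ) (_ : a ∈ coderiv S t x u), ENNReal.ofReal a

/-- Modulus `‖D*S(t,x)‖⁺ = sup {|a| : a ∈ D*S(t,x)(u), ‖u‖ ≤ 1}` (with `sup ∅ = 0`). -/
noncomputable def symMod (S : ℝ → Set E) (t : ℝ) (x : E) : ℝ≥0∞ :=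
  ⨆ (u : E) (_ : ‖u‖ ≤ 1) (a : ℝ) (_ : a ∈ coderiv S t x u), ENNReal.ofReal |a|

/-- Oriented talweg function `φ↑(t) = sup_{x ∈ S(t)} ‖D*S(t,x)|⁺`. -/
noncomputable def orientedTalweg (S : ℝ → Set E) (t : ℝ) : ℝ≥0∞ :=
  ⨆ x ∈ S t, asymMod S t x

/-- Talweg function `φ(t) = sup_{x ∈ S(t)} ‖D*S(t,x)‖⁺`. -/
noncomputable def talweg (S : ℝ → Set E) (t : ℝ) : ℝ≥0∞ :=
  ⨆ x ∈ S t, symMod S t x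

/-- `M` is a `C¹`-submanifold of codimension `c` of `ℝ × E`: locally it is the zero set
of a `C¹` submersion into `ℝ^c`. -/
def IsC1SubmanifoldCodim (c : ℕ) (M : Set (ℝ × E)) : Prop :=
  ∀ z ∈ M, ∃ U : Set (ℝ × E), IsOpen U ∧ z ∈ U ∧
    ∃ f : ℝ × E → EuclideanSpace ℝ (Fin c),
      ContDiffOn ℝ 1 f U ∧ (∀ y ∈ U, Function.Surjective ⇑(fderivWithin ℝ f U y)) ∧
      M ∩ U = {y ∈ U | f y = 0}

/-- Smooth sweeping process: the graph `𝒮` is closed, connected, and either a `C¹`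
submanifold of dimension at most `dim E` (i.e. codimension at least one), or a
full-dimensional manifold with boundary whose boundary `∂𝒮` (the topological frontier)
is a `C¹` submanifold of codimension one. -/
def SmoothSweepingProcess (S : ℝ → Set E) : Prop :=
  IsClosed (sgraph S) ∧ IsConnected (sgraph S) ∧
    ((∃ c : ℕ, 1 ≤ c ∧ IsC1SubmanifoldCodim c (sgraph S)) ∨
      (sgraph S = closure (interior (sgraph S)) ∧
        IsC1SubmanifoldCodim 1 (frontier (sgraph S))))

/-- The map `H_S(t) = ∂𝒮 ∩ ({t} × E)`. -/
def HSmap (S : ℝ → Set E) (t : ℝ) : Set (ℝ × E) :=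
  frontier (sgraph S) ∩ {p : ℝ × E | p.1 = t}

/-- Continuity at `t₀` (relative to `I`) of a set-valued map for the Hausdorff–Pompeiu
metric. -/
def HPContinuousAt {X : Type*} [PseudoEMetricSpace X] (F : ℝ → Set X) (I : Set ℝ)
    (t₀ : ℝ) : Prop :=
  ∀ ε : ℝ, 0 < ε → ∃ δ : ℝ, 0 < δ ∧ ∀ t ∈ I, |t - t₀| < δ →
    EMetric.hausdorffEdist (F t) (F t₀) < ENNReal.ofReal ε

/-- Continuity on `I` of a set-valued map for the Hausdorff–Pompeiu metric. -/
def HPContinuousOn {X : Type*} [PseudoEMetricSpace X] (F : ℝ → Set X) (I : Set ℝ) : Prop :=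
  ∀ t₀ ∈ I, HPContinuousAt F I t₀

/-- `γ` is absolutely continuous on `J` (with some integrable a.e. derivative). -/
def AbsContOn (γ : ℝ → E) (J : Set ℝ) : Prop :=
  ∃ g : ℝ → E, IntegrableOn g J ∧ ∀ s ∈ J, ∀ t ∈ J, γ t - γ s = ∫ u in s..t, g u

/-- `γ` is piecewise absolutely continuous on `I`: its discontinuities are contained in a
closed countable set `D`, and `γ` is absolutely continuous on each connected component of
`I \ D`. -/
def PiecewiseAC (γ : ℝ → E) (I : Set ℝ) : Prop :=
  ∃ D : Set ℝ, IsClosed D ∧ D.Countable ∧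
    ∀ t ∈ I \ D, AbsContOn γ (connectedComponentIn (I \ D) t)

/-- `γ` (an absolutely continuous curve, with a.e. derivative `γ'`) is an orbit of the
sweeping process defined by `S` on the interval `I`:  `γ(t) ∈ S(t)` on `I` and
`-γ̇(t) ∈ N_{S(t)}(γ(t))` for a.e. `t ∈ I`. -/
def ACOrbit (S : ℝ → Set E) (I : Set ℝ) (γ γ' : ℝ → E) : Prop :=
  (∀ t ∈ I, γ t ∈ S t) ∧ IntegrableOn γ' I ∧
    (∀ s ∈ I, ∀ t ∈ I, γ t - γ s = ∫ u in s..t, γ' u) ∧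
    (∀ᵐ t ∂(volume.restrict I), -γ' t ∈ limitingNC (S t) (γ t))

/-- `γ` (with a.e. derivative `γ'`) is a piecewise absolutely continuous orbit of the
sweeping process defined by `S` on `I`. -/
def PACOrbit (S : ℝ → Set E) (I : Set ℝ) (γ γ' : ℝ → E) : Prop :=
  ∃ D : Set ℝ, IsClosed D ∧ D.Countable ∧
    ∀ t ∈ I \ D, ACOrbit S (connectedComponentIn (I \ D) t) γ γ'

/-- Assumption (A1): from every point `(t,x) ∈ 𝒮` with `‖D*S(t,x)|⁺ < ∞` there issues an
orbit of the sweeping process. -/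
def AssumptionA1 (S : ℝ → Set E) : Prop :=
  ∀ t : ℝ, ∀ x ∈ S t, asymMod S t x < ⊤ →
    ∃ δ : ℝ, 0 < δ ∧ ∃ γ γ' : ℝ → E, ACOrbit S (Ico t (t + δ)) γ γ' ∧ γ t = x

/-- Assumption (A2) at `tb`: the oriented talweg is finite just to the right of `tb`. -/
def AssumptionA2At (S : ℝ → Set E) (tb : ℝ) : Prop :=
  ∃ δ : ℝ, 0 < δ ∧ ∀ t ∈ Ioo tb (tb + δ), orientedTalweg S t < ⊤

/-- Assumption (A3) at `tb`: `H_S` is Hausdorff–Pompeiu continuous just to the right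
of `tb`. -/
def AssumptionA3At (S : ℝ → Set E) (tb : ℝ) : Prop :=
  ∃ δ : ℝ, 0 < δ ∧ HPContinuousOn (HSmap S) (Ioo tb (tb + δ))

/-- The set `𝒯` of points of the domain at which (A2) and (A3) hold. -/
def goodSet (S : ℝ → Set E) : Set ℝ :=
  {t | t ∈ sdom S ∧ AssumptionA2At S t ∧ AssumptionA3At S t}

/-- `S` has bounded values. -/
def BoundedValues (S : ℝ → Set E) : Prop := ∀ t, Bornology.IsBounded (S t)

/-- A catching-up sequence `{(tᵢ,xᵢ)}_{i ≥ 0}` for `S`. -/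
def CatchingUp (S : ℝ → Set E) (t : ℕ → ℝ) (x : ℕ → E) : Prop :=
  StrictMono t ∧ (∀ i, x i ∈ S (t i)) ∧
    ∀ i, dist (x i) (x (i + 1)) = infDist (x i) (S (t (i + 1)))

/-- A finite catching-up sequence `{(tᵢ,xᵢ)}_{i=0}^k` for `S`. -/
def FiniteCatchingUp (S : ℝ → Set E) (k : ℕ) (t : ℕ → ℝ) (x : ℕ → E) : Prop :=
  (∀ i < k, t i < t (i + 1)) ∧ (∀ i ≤ k, x i ∈ S (t i)) ∧
    ∀ i < k, dist (x i) (x (i + 1)) = infDist (x i) (S (t (i + 1)))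

/-- A piecewise catching-up sequence for `S`: blocks `{(tʲᵢ,Yʲᵢ)}_{i=0}^{k_j}`, each a
catching-up sequence, with `tʲ_{k_j} = tʲ⁺¹₀`. -/
def PiecewiseCatchingUp (S : ℝ → Set E) (k : ℕ → ℕ) (t : ℕ → ℕ → ℝ) (Y : ℕ → ℕ → E) : Prop :=
  (∀ j, FiniteCatchingUp S (k j) (t j) (Y j)) ∧ ∀ j, t j (k j) = t (j + 1) 0

/-- Outer semicontinuity of `S` at `tb`. -/
def OuterSemicontinuousAt (S : ℝ → Set E) (tb : ℝ) : Prop :=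
  ∀ (tk : ℕ → ℝ) (xk : ℕ → E) (x : E), (∀ k, xk k ∈ S (tk k)) →
    Tendsto tk atTop (𝓝 tb) → Tendsto xk atTop (𝓝 x) → x ∈ S tb

/-- Inner semicontinuity of `S` at `tb`. -/
def InnerSemicontinuousAt (S : ℝ → Set E) (tb : ℝ) : Prop :=
  ∀ x ∈ S tb, ∀ tk : ℕ → ℝ, (∀ k, tk k ∈ sdom S) → Tendsto tk atTop (𝓝 tb) →
    Tendsto (fun k => infDist x (S (tk k))) atTop (𝓝 0)

/-- The oriented calm graphical modulus `calm↑S(t,x)`. -/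
noncomputable def calmUp (S : ℝ → Set E) (t : ℝ) (x : E) : ℝ :=
  sInf {κ : ℝ | 0 < κ ∧ ∃ ε : ℝ, 0 < ε ∧ ∃ δ : ℝ, 0 < δ ∧
    ∀ t₁ ∈ Ioo t (t + ε), S t ∩ ball x δ ⊆ S t₁ + ball (0 : E) (κ * (t₁ - t))}

end Preliminaries
section Aux

variable {E : Type*} [NormedAddCommGroup E] [InnerProductSpace ℝ E]

lemma pinner_comm (v q : ℝ × E) : pinner v q = pinner q v := by
  simp [pinner, mul_comm, real_inner_comm]

lemma pinner_add_right (v p q : ℝ × E) : pinner v (p + q) = pinner v p + pinner v q := by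
  simp [pinner, inner_add_right]; ring

lemma pinner_sub_right (v p q : ℝ × E) : pinner v (p - q) = pinner v p - pinner v q := by
  simp [pinner, inner_sub_right]; ring

lemma pinner_smul_right (v q : ℝ × E) (s : ℝ) : pinner v (s • q) = s * pinner v q := by
  simp [pinner, inner_smul_right]; ring

lemma pinner_smul_left (v q : ℝ × E) (s : ℝ) : pinner (s • v) q = s * pinner v q := by
  rw [pinner_comm, pinner_smul_right, pinner_comm]

lemma pinner_sub_left (v p q : ℝ × E) : pinner (v - p) q = pinner v q - pinner p q := by
  rw [pinner_comm, pinner_sub_right, pinner_comm q v, pinner_comm q p]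

lemma pinner_neg_left (v q : ℝ × E) : pinner (-v) q = -pinner v q := by
  simp [pinner, inner_neg_left]; ring

lemma abs_pinner_le (v q : ℝ × E) : |pinner v q| ≤ 2 * ‖v‖ * ‖q‖ := by
  have h1 : |v.1 * q.1| ≤ ‖v‖ * ‖q‖ := by
    rw [abs_mul]
    exact mul_le_mul (norm_fst_le v) (norm_fst_le q) (abs_nonneg _) (norm_nonneg _)
  have h2 : |⟪v.2, q.2⟫| ≤ ‖v‖ * ‖q‖ := by
    refine (abs_real_inner_le_norm _ _).trans ?_
    exact mul_le_mul (norm_snd_le v) (norm_snd_le q) (norm_nonneg _) (norm_nonneg _)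
  calc |pinner v q| ≤ |v.1 * q.1| + |⟪v.2, q.2⟫| := abs_add_le _ _
    _ ≤ 2 * ‖v‖ * ‖q‖ := by linarith

lemma pinner_self_nonneg (q : ℝ × E) : 0 ≤ pinner q q := by
  have := real_inner_self_nonneg (x := q.2)
  have := mul_self_nonneg q.1
  simp only [pinner]; linarith

lemma pinner_self_pos {q : ℝ × E} (hq : q ≠ 0) : 0 < pinner q q := by
  rcases (pinner_self_nonneg q).lt_or_eq with h | h
  · exact h
  · exfalso; apply hq
    have hp : pinner q q = q.1 * q.1 + ⟪q.2, q.2⟫ := by simp [pinner]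
    have h0 : q.1 * q.1 + ⟪q.2, q.2⟫ = 0 := by rw [← hp, ← h]
    have h1 : q.1 * q.1 = 0 ∧ ⟪q.2, q.2⟫ = 0 := by
      constructor <;> nlinarith [real_inner_self_nonneg (x := q.2), mul_self_nonneg q.1]
    have hq1 : q.1 = 0 := by nlinarith [h1.1]
    have hq2 : q.2 = 0 := by
      have := h1.2
      rwa [real_inner_self_eq_norm_sq, pow_eq_zero_iff (two_ne_zero), norm_eq_zero] at this
    exact Prod.ext hq1 hq2

lemma eq_zero_of_pinner_self_nonpos {q : ℝ × E} (h : pinner q q ≤ 0) : q = 0 := by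
  by_contra hq
  exact absurd h (not_le.2 (pinner_self_pos hq))

lemma continuous_pinner : Continuous (fun p : (ℝ × E) × (ℝ × E) => pinner p.1 p.2) := by
  unfold pinner
  exact ((continuous_fst.fst.mul continuous_snd.fst).add
    (continuous_inner.comp (continuous_fst.snd.prodMk continuous_snd.snd)))

end Aux
section Aux2

variable {E : Type*} [NormedAddCommGroup E] [InnerProductSpace ℝ E] [FiniteDimensional ℝ E]
variable {F : Type*} [NormedAddCommGroup F] [NormedSpace ℝ F] [FiniteDimensional ℝ F]

/-- Key tangent lemma: for a set `M` that locally near `z` is the zero set of a submersion `f`,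
any Fréchet normal `v` at `z` pairs nonpositively with kernel vectors of the derivative. -/
lemma tangent_pinner_le {M U : Set (ℝ × E)} (hU : IsOpen U) {f : ℝ × E → F} {z : ℝ × E}
    (hzU : z ∈ U) {f' : (ℝ × E) →L[ℝ] F} (hf : HasStrictFDerivAt f f' z)
    (hsurj : f'.range = ⊤) (hMU : M ∩ U = {y ∈ U | f y = 0}) (hfz : f z = 0)
    {v : ℝ × E} (hv : v ∈ frechetNCP M z) {w : ℝ × E} (hw : f' w = 0) :
    pinner v w ≤ 0 := by
  haveI : CompleteSpace (ℝ × E) := FiniteDimensional.complete ℝ (ℝ × E)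
  set wk : f'.ker := ⟨w, LinearMap.mem_ker.2 hw⟩ with hwk
  set ψ : f'.ker → ℝ × E := fun p => hf.implicitFunction f f' hsurj (f z) p with hψ
  have hψ0 : ψ 0 = z := hf.implicitFunction_apply_image hsurj
  have hψd : HasStrictFDerivAt ψ (f'.ker).subtypeL 0 := hf.to_implicitFunction hsurj
  set α : ℝ → ℝ × E := fun s => ψ (s • wk) with hα
  -- the curve has derivative w at 0
  have hlin : HasFDerivAt (fun s : ℝ => s • wk)
      (ContinuousLinearMap.smulRight (1 : ℝ →L[ℝ] ℝ) wk) 0 :=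
    (ContinuousLinearMap.smulRight (1 : ℝ →L[ℝ] ℝ) wk).hasFDerivAt
  have hcomp : HasFDerivAt α (((f'.ker).subtypeL).comp
      (ContinuousLinearMap.smulRight (1 : ℝ →L[ℝ] ℝ) wk)) 0 := by
    have h0 : (0 : ℝ) • wk = 0 := zero_smul _ _
    exact (h0 ▸ hψd.hasFDerivAt : HasFDerivAt ψ _ ((0:ℝ) • wk)).comp 0 hlin
  have hderiv : HasDerivAt α w 0 := by
    have := hcomp.hasDerivAt
    simpa using this
  -- eventually α s ∈ M
  have hαz : α 0 = z := by simp [hα, hψ0]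
  have hcont : ContinuousAt α 0 := hderiv.continuousAt
  have hmemU : ∀ᶠ s in 𝓝 (0 : ℝ), α s ∈ U := hcont (hU.mem_nhds (hαz ▸ hzU))
  have hfeq : ∀ᶠ s in 𝓝 (0 : ℝ), f (α s) = f z := by
    have hmap := hf.map_implicitFunction_eq hsurj
    have htend : Filter.Tendsto (fun s : ℝ => ((f z), s • wk)) (𝓝 0) (𝓝 (f z, 0)) := by
      refine Filter.Tendsto.prodMk_nhds tendsto_const_nhds ?_
      have : Filter.Tendsto (fun s : ℝ => s • wk) (𝓝 0) (𝓝 ((0:ℝ) • wk)) :=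
        (continuous_id.smul continuous_const).tendsto 0
      simpa using this
    exact htend.eventually hmap
  have hmemM : ∀ᶠ s in 𝓝 (0 : ℝ), α s ∈ M := by
    filter_upwards [hmemU, hfeq] with s h1 h2
    have : α s ∈ M ∩ U := by rw [hMU]; exact ⟨h1, by rw [h2, hfz]⟩
    exact this.1
  -- main estimate : pinner v w ≤ ε ‖w‖ for every ε > 0
  have key : ∀ ε : ℝ, 0 < ε → pinner v w ≤ ε * ‖w‖ := by
    intro ε hε
    obtain ⟨δ, hδ, hδprop⟩ := hv ε hε
    have hslope : Filter.Tendsto (fun s : ℝ => s⁻¹ • (α s - z)) (𝓝[>] (0:ℝ)) (𝓝 w) := by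
      have := hasDerivAt_iff_tendsto_slope.1 hderiv
      have h2 : Filter.Tendsto (slope α 0) (𝓝[>] (0:ℝ)) (𝓝 w) :=
        this.mono_left (nhdsWithin_mono _ (fun s hs => ne_of_gt hs))
      refine h2.congr (fun s => ?_)
      simp [slope, hαz, vsub_eq_sub]
    have hpin : Filter.Tendsto (fun s : ℝ => pinner v (s⁻¹ • (α s - z))) (𝓝[>] (0:ℝ))
        (𝓝 (pinner v w)) := by
      have hc : Continuous fun q : ℝ × E => pinner v q :=
        continuous_pinner.comp (continuous_const.prodMk continuous_id)
      exact (hc.tendsto w).comp hslope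
    have hnrm : Filter.Tendsto (fun s : ℝ => ε * ‖s⁻¹ • (α s - z)‖) (𝓝[>] (0:ℝ))
        (𝓝 (ε * ‖w‖)) := (tendsto_const_nhds.mul ((continuous_norm.tendsto w).comp hslope))
    have hev : ∀ᶠ s in 𝓝[>] (0:ℝ),
        pinner v (s⁻¹ • (α s - z)) ≤ ε * ‖s⁻¹ • (α s - z)‖ := by
      have hmemM' := hmemM.filter_mono (nhdsWithin_le_nhds (s := Set.Ioi (0:ℝ)))
      have hdist : ∀ᶠ s in 𝓝 (0:ℝ), ‖α s - z‖ < δ := by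
        have : Filter.Tendsto (fun s => ‖α s - z‖) (𝓝 0) (𝓝 0) := by
          have := (hcont.tendsto).sub (tendsto_const_nhds (x := z))
          rw [hαz] at this
          simpa using this.norm
        exact this.eventually (eventually_lt_nhds hδ)
      have hdist' := hdist.filter_mono (nhdsWithin_le_nhds (s := Set.Ioi (0:ℝ)))
      filter_upwards [hmemM', hdist', self_mem_nhdsWithin] with s h1 h2 (h3 : 0 < s)
      have hbase := hδprop (α s) h1 h2
      rw [pinner_smul_right, norm_smul, norm_inv, Real.norm_eq_abs, abs_of_pos h3]
      have hinv : 0 ≤ s⁻¹ := le_of_lt (inv_pos.2 h3)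
      calc s⁻¹ * pinner v (α s - z) ≤ s⁻¹ * (ε * ‖α s - z‖) := by
            exact mul_le_mul_of_nonneg_left hbase hinv
        _ = ε * (s⁻¹ * ‖α s - z‖) := by ring
    exact le_of_tendsto_of_tendsto hpin hnrm hev
  -- conclude
  rcases eq_or_ne w 0 with rfl | hw0
  · simp [pinner]
  · have hn : 0 < ‖w‖ := norm_pos_iff.2 hw0
    by_contra hcon
    push_neg at hcon
    have := key (pinner v w / (2 * ‖w‖)) (by positivity)
    rw [div_mul_eq_mul_div, mul_comm] at this
    have heq : ‖w‖ * pinner v w / (2 * ‖w‖) = pinner v w / 2 := by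
      field_simp
    rw [heq] at this
    linarith

end Aux2
section Aux3

variable {E : Type*} [NormedAddCommGroup E] [InnerProductSpace ℝ E] [FiniteDimensional ℝ E]
variable {F : Type*} [NormedAddCommGroup F] [NormedSpace ℝ F] [FiniteDimensional ℝ F]

omit [FiniteDimensional ℝ E] in
lemma frechetNCP_anti {C D : Set (ℝ × E)} (hCD : C ⊆ D) (z : ℝ × E) :
    frechetNCP D z ⊆ frechetNCP C z := by
  intro v hv ε hε
  obtain ⟨δ, hδ, hp⟩ := hv ε hε
  exact ⟨δ, hδ, fun y hy => hp y (hCD hy)⟩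

/-- On a level set of a submersion, Fréchet normals are "two-sided". -/
lemma frechetNCP_neg_of_chart {M U : Set (ℝ × E)} (hU : IsOpen U) {f : ℝ × E → F} {z : ℝ × E}
    (hzU : z ∈ U) {f' : (ℝ × E) →L[ℝ] F} (hf : HasStrictFDerivAt f f' z)
    (hsurj : f'.range = ⊤) (hMU : M ∩ U = {y ∈ U | f y = 0}) (hfz : f z = 0)
    {v : ℝ × E} (hv : v ∈ frechetNCP M z) : -v ∈ frechetNCP M z := by
  -- Fréchet normals annihilate the kernel of f'
  have hker : ∀ w : ℝ × E, f' w = 0 → pinner v w = 0 := by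
    intro w hw
    have h1 := tangent_pinner_le hU hzU hf hsurj hMU hfz hv hw
    have h2 := tangent_pinner_le hU hzU hf hsurj hMU hfz hv (w := -w) (by simp [hw])
    have : pinner v (-w) = -pinner v w := by
      have := pinner_smul_right v w (-1); simpa using this
    rw [this] at h2
    linarith
  -- choose a continuous right inverse of f'
  obtain ⟨R, hR⟩ := f'.exists_right_inverse_of_surjective hsurj
  intro ε hε
  set C : ℝ := 2 * ‖v‖ * ‖R‖ + 1 with hC
  have hCpos : 0 < C := by positivity
  set η : ℝ := ε / C with hη
  have hηpos : 0 < η := div_pos hε hCpos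
  -- differentiability estimate
  have hlittle : ∀ᶠ y in 𝓝 z, ‖f y - f z - f' (y - z)‖ ≤ η * ‖y - z‖ := by
    have := hf.hasFDerivAt.isLittleO
    exact this.def hηpos
  obtain ⟨δ₁, hδ₁, hball₁⟩ := Metric.eventually_nhds_iff_ball.1 hlittle
  obtain ⟨δ₂, hδ₂, hball₂⟩ := Metric.isOpen_iff.1 hU z hzU
  refine ⟨min δ₁ δ₂, lt_min hδ₁ hδ₂, fun y hy hyd => ?_⟩
  have hyU : y ∈ U := hball₂ (by
    rw [Metric.mem_ball, dist_eq_norm]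
    exact lt_of_lt_of_le hyd (min_le_right _ _))
  have hfy : f y = 0 := by
    have : y ∈ M ∩ U := ⟨hy, hyU⟩
    rw [hMU] at this
    exact this.2
  have hest : ‖f' (y - z)‖ ≤ η * ‖y - z‖ := by
    have := hball₁ y (by
      rw [Metric.mem_ball, dist_eq_norm]
      exact lt_of_lt_of_le hyd (min_le_left _ _))
    rwa [hfy, hfz, sub_zero, zero_sub, norm_neg] at this
  set q : ℝ × E := R (f' (y - z)) with hq
  have hfp : f' (y - z - q) = 0 := by
    have hRq : f' q = f' (y - z) := by
      have := congrArg (fun L => L (f' (y - z))) hR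
      exact this
    rw [map_sub, hRq, sub_self]
  have hpq : pinner v (y - z) = pinner v q := by
    have h0 : y - z - q + q = y - z := by abel
    have : pinner v (y - z) = pinner v (y - z - q) + pinner v q := by
      rw [← pinner_add_right, h0]
    rw [this, hker _ hfp, zero_add]
  have hqn : ‖q‖ ≤ ‖R‖ * (η * ‖y - z‖) :=
    le_trans (R.le_opNorm _) (mul_le_mul_of_nonneg_left hest (norm_nonneg R))
  have habs : |pinner v q| ≤ 2 * ‖v‖ * ‖R‖ * (η * ‖y - z‖) := by
    calc |pinner v q| ≤ 2 * ‖v‖ * ‖q‖ := abs_pinner_le v q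
      _ ≤ 2 * ‖v‖ * (‖R‖ * (η * ‖y - z‖)) := by
          apply mul_le_mul_of_nonneg_left hqn (by positivity)
      _ = 2 * ‖v‖ * ‖R‖ * (η * ‖y - z‖) := by ring
  have hfinal : C * η * ‖y - z‖ ≤ ε * ‖y - z‖ := by
    have hce : C * η = ε := by rw [hη, mul_div_assoc']; exact mul_div_cancel_left₀ ε hCpos.ne'
    rw [hce]
  rw [pinner_neg_left, hpq]
  calc -pinner v q ≤ |pinner v q| := neg_le_abs _
    _ ≤ 2 * ‖v‖ * ‖R‖ * (η * ‖y - z‖) := habs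
    _ ≤ C * (η * ‖y - z‖) := by
        have h1 : 2 * ‖v‖ * ‖R‖ ≤ C := by rw [hC]; linarith
        exact mul_le_mul_of_nonneg_right h1 (by positivity)
    _ = C * η * ‖y - z‖ := by ring
    _ ≤ ε * ‖y - z‖ := hfinal

/-- Fréchet normals to a C¹ submanifold are symmetric under negation. -/
lemma frechetNCP_neg_of_submanifold {c : ℕ} {M : Set (ℝ × E)} (hM : IsC1SubmanifoldCodim c M)
    {z : ℝ × E} (hz : z ∈ M) {v : ℝ × E} (hv : v ∈ frechetNCP M z) : -v ∈ frechetNCP M z := by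
  obtain ⟨U, hU, hzU, f, hfC1, hfsurj, hMU⟩ := hM z hz
  have hdiff : ContDiffAt ℝ 1 f z := hfC1.contDiffAt (hU.mem_nhds hzU)
  have hstrict : HasStrictFDerivAt f (fderiv ℝ f z) z := hdiff.hasStrictFDerivAt one_ne_zero
  have hsurj : (fderiv ℝ f z).range = ⊤ := by
    have := hfsurj z hzU
    rw [fderivWithin_of_isOpen hU hzU] at this
    exact LinearMap.range_eq_top.2 this
  have hfz : f z = 0 := by
    have : z ∈ M ∩ U := ⟨hz, hzU⟩
    rw [hMU] at this
    exact this.2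
  exact frechetNCP_neg_of_chart hU hzU hstrict hsurj hMU hfz hv

lemma limitingNCP_neg_of_submanifold {c : ℕ} {M : Set (ℝ × E)} (hM : IsC1SubmanifoldCodim c M)
    {z : ℝ × E} {v : ℝ × E} (hv : v ∈ limitingNCP M z) : -v ∈ limitingNCP M z := by
  obtain ⟨zs, vs, h1, h2, h3, h4⟩ := hv
  exact ⟨zs, fun i => -(vs i), h1, fun i => frechetNCP_neg_of_submanifold hM (h1 i) (h2 i),
    h3, h4.neg⟩

end Aux3
section Aux4

variable {E : Type*} [NormedAddCommGroup E] [InnerProductSpace ℝ E]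

lemma le_asymMod {S : ℝ → Set E} {t : ℝ} {x : E} {u : E} (hu : ‖u‖ ≤ 1) {a : ℝ}
    (ha : a ∈ coderiv S t x u) : ENNReal.ofReal a ≤ asymMod S t x :=
  le_iSup_of_le u <| le_iSup_of_le hu <| le_iSup_of_le a <| le_iSup_of_le ha le_rfl

lemma le_symMod {S : ℝ → Set E} {t : ℝ} {x : E} {u : E} (hu : ‖u‖ ≤ 1) {a : ℝ}
    (ha : a ∈ coderiv S t x u) : ENNReal.ofReal |a| ≤ symMod S t x :=
  le_iSup_of_le u <| le_iSup_of_le hu <| le_iSup_of_le a <| le_iSup_of_le ha le_rfl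

lemma asymMod_le_symMod (S : ℝ → Set E) (t : ℝ) (x : E) : asymMod S t x ≤ symMod S t x := by
  refine iSup_le fun u => iSup_le fun hu => iSup_le fun a => iSup_le fun ha => ?_
  exact le_trans (ENNReal.ofReal_le_ofReal (le_abs_self a)) (le_symMod hu ha)

lemma asymMod_eq_symMod_of_neg_mem {S : ℝ → Set E} {t : ℝ} {x : E}
    (hsymm : ∀ p ∈ limitingNCP (sgraph S) (t, x), -p ∈ limitingNCP (sgraph S) (t, x)) :
    asymMod S t x = symMod S t x := by
  refine le_antisymm (asymMod_le_symMod S t x) ?_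
  refine iSup_le fun u => iSup_le fun hu => iSup_le fun a => iSup_le fun ha => ?_
  rcases le_or_gt 0 a with h0 | h0
  · rw [abs_of_nonneg h0]
    exact le_asymMod hu ha
  · have hneg : -a ∈ coderiv S t x (-u) := by
      have := hsymm _ ha
      have heq : -((a : ℝ), -u) = ((-a : ℝ), - -u) := by simp
      rw [heq] at this
      exact this
    rw [abs_of_neg h0]
    exact le_asymMod (by rwa [norm_neg]) hneg

lemma asymMod_eq_symMod_of_nonneg {S : ℝ → Set E} {t : ℝ} {x : E}
    (hpos : ∀ u : E, ‖u‖ ≤ 1 → ∀ a ∈ coderiv S t x u, 0 ≤ a) :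
    asymMod S t x = symMod S t x := by
  refine le_antisymm (asymMod_le_symMod S t x) ?_
  refine iSup_le fun u => iSup_le fun hu => iSup_le fun a => iSup_le fun ha => ?_
  rw [abs_of_nonneg (hpos u hu a ha)]
  exact le_asymMod hu ha

end Aux4
section Aux5

variable {E : Type*} [NormedAddCommGroup E] [InnerProductSpace ℝ E] [FiniteDimensional ℝ E]

/-- Representative of a functional on `ℝ × E` with respect to the pairing `pinner`. -/
noncomputable def pgrad (L : (ℝ × E) →L[ℝ] ℝ) : ℝ × E :=
  letI : CompleteSpace E := FiniteDimensional.complete ℝ E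
  (L (1, 0), (InnerProductSpace.toDual ℝ E).symm (L.comp (ContinuousLinearMap.inr ℝ ℝ E)))

lemma pinner_pgrad (L : (ℝ × E) →L[ℝ] ℝ) (q : ℝ × E) : pinner (pgrad L) q = L q := by
  letI : CompleteSpace E := FiniteDimensional.complete ℝ E
  have h2 : ⟪(pgrad L).2, q.2⟫ = L (0, q.2) := by
    rw [show (pgrad L).2 = (InnerProductSpace.toDual ℝ E).symm
      (L.comp (ContinuousLinearMap.inr ℝ ℝ E)) from rfl, InnerProductSpace.toDual_symm_apply]
    rfl
  have h1 : (pgrad L).1 * q.1 = L (q.1, 0) := by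
    have : ((q.1 : ℝ), (0 : E)) = q.1 • ((1 : ℝ), (0 : E)) := by simp [Prod.smul_def]
    rw [show (pgrad L).1 = L (1, 0) from rfl, this, _root_.map_smul]
    simp [mul_comm]
  have hq : ((q.1, (0 : E)) : ℝ × E) + ((0 : ℝ), q.2) = q := by simp
  calc pinner (pgrad L) q = (pgrad L).1 * q.1 + ⟪(pgrad L).2, q.2⟫ := rfl
    _ = L (q.1, 0) + L (0, q.2) := by rw [h1, h2]
    _ = L q := by rw [← map_add, hq]

lemma pgrad_ne_zero {L : (ℝ × E) →L[ℝ] ℝ} (hL : L.range = ⊤) : pgrad L ≠ 0 := by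
  intro h0
  obtain ⟨q, hq⟩ := LinearMap.range_eq_top.1 hL 1
  have := pinner_pgrad L q
  rw [h0, show L q = 1 from hq] at this
  have hz : pinner (0 : ℝ × E) q = 0 := by simp [pinner]
  rw [hz] at this
  exact one_ne_zero this.symm

lemma pinner_pgrad_self_pos {L : (ℝ × E) →L[ℝ] ℝ} (hL : L.range = ⊤) :
    0 < pinner (pgrad L) (pgrad L) := pinner_self_pos (pgrad_ne_zero hL)

lemma continuous_pgrad : Continuous (pgrad (E := E)) := by
  letI : CompleteSpace E := FiniteDimensional.complete ℝ E
  apply Continuous.prodMk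
  · exact (ContinuousLinearMap.apply ℝ ℝ ((1 : ℝ), (0 : E))).continuous
  · refine (LinearIsometryEquiv.continuous _).comp ?_
    exact (((ContinuousLinearMap.compSL E (ℝ × E) ℝ (RingHom.id ℝ)
      (RingHom.id ℝ)).flip (ContinuousLinearMap.inr ℝ ℝ E))).continuous

end Aux5
section Aux6

variable {E : Type*} [NormedAddCommGroup E] [InnerProductSpace ℝ E] [FiniteDimensional ℝ E]

lemma exists_side {A U : Set (ℝ × E)} (hA : IsClosed A) (hreg : A = closure (interior A))
    {z : ℝ × E} (hzf : z ∈ frontier A) (hU : IsOpen U) (hzU : z ∈ U)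
    {g : ℝ × E → ℝ} {g' : (ℝ × E) →L[ℝ] ℝ} (hg1 : HasStrictFDerivAt g g' z)
    (hsurjz : g'.range = ⊤)
    (hfr : frontier A ∩ U = {y ∈ U | g y = 0}) :
    ∃ V : Set (ℝ × E), IsOpen V ∧ z ∈ V ∧ V ⊆ U ∧ ∃ σ : ℝ,
      (σ = 1 ∨ σ = -1) ∧ ∀ y ∈ V, 0 < σ * g y → y ∈ A := by
  haveI : CompleteSpace (ℝ × E) := FiniteDimensional.complete ℝ (ℝ × E)
  have hzA : z ∈ A := hA.frontier_subset hzf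
  have hgz : g z = 0 := by
    have : z ∈ frontier A ∩ U := ⟨hzf, hzU⟩
    rw [hfr] at this; exact this.2
  set φ := hg1.implicitToOpenPartialHomeomorph g g' hsurjz with hφ
  have hzsrc : z ∈ φ.source := hg1.mem_implicitToOpenPartialHomeomorph_source hsurjz
  have hfst : ∀ y : ℝ × E, (φ y).1 = g y := fun y => rfl
  have hcsymm : ContinuousAt φ.symm (φ z) :=
    φ.symm.continuousAt (by rw [φ.symm_source]; exact φ.map_source hzsrc)
  have hst : φ.symm ⁻¹' (U ∩ φ.source) ∈ 𝓝 (φ z) := by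
    refine hcsymm.preimage_mem_nhds ((hU.inter φ.open_source).mem_nhds ?_)
    rw [φ.left_inv hzsrc]; exact ⟨hzU, hzsrc⟩
  have htar : φ.target ∈ 𝓝 (φ z) := φ.open_target.mem_nhds (φ.map_source hzsrc)
  obtain ⟨r, hr, hball⟩ := Metric.mem_nhds_iff.1 (Filter.inter_mem htar hst)
  set B := ball (φ z) r with hB
  set V : Set (ℝ × E) := φ.symm '' B with hV
  have hBtar : B ⊆ φ.target := fun p hp => (hball hp).1
  have hVopen : IsOpen V :=
    φ.symm.isOpen_image_of_subset_source isOpen_ball (by rw [φ.symm_source]; exact hBtar)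
  have hzV : z ∈ V := ⟨φ z, mem_ball_self hr, φ.left_inv hzsrc⟩
  have hVU : V ⊆ U := by
    rintro _ ⟨p, hp, rfl⟩
    exact ((hball hp).2 : φ.symm p ∈ U ∩ φ.source).1
  have hgval : ∀ p ∈ B, g (φ.symm p) = p.1 := by
    intro p hp
    rw [← hfst, φ.right_inv (hBtar hp)]
  -- both open sides
  have sideprop : ∀ τ : ℝ, τ = 1 ∨ τ = -1 →
      (V ∩ {y | 0 < τ * g y} ⊆ A ∨ V ∩ {y | 0 < τ * g y} ∩ A = ∅) := by
    intro τ hτ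
    set W := V ∩ {y | 0 < τ * g y} with hW
    have himg : W = φ.symm '' (B ∩ {p | 0 < τ * p.1}) := by
      apply Set.Subset.antisymm
      · rintro y ⟨⟨p, hp, rfl⟩, hgy⟩
        refine ⟨p, ⟨hp, ?_⟩, rfl⟩
        have := hgval p hp
        simpa [this] using hgy
      · rintro _ ⟨p, ⟨hp, hp1⟩, rfl⟩
        exact ⟨⟨p, hp, rfl⟩, by simpa [hgval p hp] using hp1⟩
    have hconv : Convex ℝ (B ∩ {p : ℝ × (g'.ker) | 0 < τ * p.1}) := by
      refine (convex_ball _ _).inter ?_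
      have : {p : ℝ × (g'.ker) | 0 < τ * p.1} =
          (τ • LinearMap.fst ℝ ℝ (g'.ker)) ⁻¹' (Set.Ioi 0) := rfl
      rw [this]
      exact (convex_Ioi (0 : ℝ)).linear_preimage _
    have hWconn : IsPreconnected W := by
      rw [himg]
      exact hconv.isPreconnected.image _
        (φ.continuousOn_symm.mono (fun p hp => hBtar hp.1))
    have hcover : W ⊆ interior A ∪ Aᶜ := by
      intro y hyW
      by_cases hyA : y ∈ A
      · left
        have hyc : y ∈ interior A ∪ frontier A := by
          rw [← closure_eq_interior_union_frontier, hA.closure_eq]; exact hyA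
        rcases hyc with h | h
        · exact h
        · exfalso
          have : y ∈ frontier A ∩ U := ⟨h, hVU hyW.1⟩
          rw [hfr] at this
          have hgy0 : g y = 0 := this.2
          have := hyW.2
          rw [Set.mem_setOf_eq, hgy0, mul_zero] at this
          exact lt_irrefl 0 this
      · exact Or.inr hyA
    by_cases h1 : (W ∩ interior A).Nonempty
    · by_cases h2 : (W ∩ Aᶜ).Nonempty
      · exfalso
        obtain ⟨y, _, hy2, hy3⟩ := hWconn (interior A) Aᶜ isOpen_interior hA.isOpen_compl
          hcover h1 h2
        exact hy3 (interior_subset hy2)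
      · left
        intro y hy
        rcases hcover hy with h | h
        · exact interior_subset h
        · exact absurd ⟨y, hy, h⟩ h2
    · right
      ext y
      simp only [Set.mem_inter_iff, Set.mem_empty_iff_false, iff_false, not_and]
      intro hyW hyA
      rcases hcover hyW with h | h
      · exact h1 ⟨y, hyW, h⟩
      · exact h hyA
  have hWp := sideprop 1 (Or.inl rfl)
  have hWm := sideprop (-1) (Or.inr rfl)
  -- at least one side meets A
  have hmeet : (V ∩ {y | 0 < 1 * g y} ∩ A).Nonempty ∨ (V ∩ {y | 0 < (-1) * g y} ∩ A).Nonempty := by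
    have hzcl : z ∈ closure (interior A) := by rw [← hreg]; exact hzA
    obtain ⟨y, hyV, hyint⟩ := (_root_.mem_closure_iff.1 hzcl) V hVopen hzV
    have hgy : g y ≠ 0 := by
      intro h0
      have : y ∈ frontier A := by
        have : y ∈ {y ∈ U | g y = 0} := ⟨hVU hyV, h0⟩
        rw [← hfr] at this; exact this.1
      exact this.2 hyint
    rcases lt_or_gt_of_ne hgy with h | h
    · exact Or.inr ⟨y, ⟨hyV, by simpa using h⟩, interior_subset hyint⟩
    · exact Or.inl ⟨y, ⟨hyV, by simpa using h⟩, interior_subset hyint⟩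
  refine ⟨V, hVopen, hzV, hVU, ?_⟩
  rcases hWp with hp | hp
  · exact ⟨1, Or.inl rfl, fun y hyV hgy => hp ⟨hyV, hgy⟩⟩
  · rcases hWm with hm | hm
    · exact ⟨-1, Or.inr rfl, fun y hyV hgy => hm ⟨hyV, hgy⟩⟩
    · exfalso
      rcases hmeet with h | h
      · obtain ⟨y, hy⟩ := h; rw [hp] at hy; exact hy
      · obtain ⟨y, hy⟩ := h; rw [hm] at hy; exact hy

end Aux6
section Aux7

variable {E : Type*} [NormedAddCommGroup E] [InnerProductSpace ℝ E] [FiniteDimensional ℝ E]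

omit [FiniteDimensional ℝ E] in
lemma nonpos_of_forall_le_eps {a b : ℝ} (hb : 0 ≤ b) (h : ∀ ε : ℝ, 0 < ε → a ≤ ε * b) : a ≤ 0 := by
  by_contra hcon
  push_neg at hcon
  rcases hb.lt_or_eq with hb' | hb'
  · have := h (a / (2 * b)) (by positivity)
    rw [div_mul_eq_mul_div] at this
    have heq : a * b / (2 * b) = a / 2 := by field_simp
    rw [heq] at this
    linarith
  · have := h 1 one_pos
    rw [← hb', mul_zero] at this
    linarith

omit [FiniteDimensional ℝ E] in
lemma frechetNCP_eq_zero_of_interior {A : Set (ℝ × E)} {z' : ℝ × E} (hz : z' ∈ interior A)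
    {v : ℝ × E} (hv : v ∈ frechetNCP A z') : v = 0 := by
  obtain ⟨ρ, hρ, hball⟩ := Metric.isOpen_iff.1 isOpen_interior z' hz
  refine eq_zero_of_pinner_self_nonpos (nonpos_of_forall_le_eps (norm_nonneg v) fun ε hε => ?_)
  obtain ⟨δ, hδ, hp⟩ := hv ε hε
  set s : ℝ := min δ ρ / (2 * (‖v‖ + 1)) with hs
  have hspos : 0 < s := by positivity
  have hsv : s * ‖v‖ < min δ ρ := by
    have h1 : s * ‖v‖ ≤ s * (‖v‖ + 1) := by nlinarith [hspos]
    have h2 : s * (‖v‖ + 1) = min δ ρ / 2 := by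
      rw [hs]; field_simp
    have h3 : min δ ρ / 2 < min δ ρ := by
      have := lt_min hδ hρ; linarith
    linarith
  set y := z' + s • v with hy
  have hyz : y - z' = s • v := by rw [hy]; abel
  have hnorm : ‖y - z'‖ = s * ‖v‖ := by
    rw [hyz, norm_smul, Real.norm_eq_abs, abs_of_pos hspos]
  have hyA : y ∈ A := interior_subset (hball (by
    rw [Metric.mem_ball, dist_eq_norm, hnorm]
    exact lt_of_lt_of_le hsv (min_le_right _ _)))
  have := hp y hyA (by rw [hnorm]; exact lt_of_lt_of_le hsv (min_le_left _ _))
  rw [hyz, pinner_smul_right, norm_smul, Real.norm_eq_abs, abs_of_pos hspos] at this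
  have h2 : s * pinner v v ≤ s * (ε * ‖v‖) := by
    calc s * pinner v v ≤ ε * (s * ‖v‖) := this
      _ = s * (ε * ‖v‖) := by ring
  exact le_of_mul_le_mul_left h2 hspos

lemma frechet_ray {A U V : Set (ℝ × E)} (hA : IsClosed A) (hU : IsOpen U)
    {g : ℝ × E → ℝ} (hgC1 : ContDiffOn ℝ 1 g U)
    (hsurj : ∀ y ∈ U, (fderiv ℝ g y).range = ⊤)
    (hfr : frontier A ∩ U = {y ∈ U | g y = 0})
    (hVopen : IsOpen V) (hVU : V ⊆ U) {σ : ℝ} (hσ : σ = 1 ∨ σ = -1)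
    (hside : ∀ y ∈ V, 0 < σ * g y → y ∈ A)
    {z' : ℝ × E} (hz'A : z' ∈ A) (hz'V : z' ∈ V)
    {v : ℝ × E} (hv : v ∈ frechetNCP A z') :
    ∃ c : ℝ, v = c • pgrad (fderiv ℝ g z') ∧ σ * c ≤ 0 := by
  have hz'U : z' ∈ U := hVU hz'V
  set ℓ := fderiv ℝ g z' with hℓ
  set n := pgrad ℓ with hn
  have hnpos : 0 < pinner n n := pinner_pgrad_self_pos (hsurj z' hz'U)
  have hln : ∀ q : ℝ × E, pinner n q = ℓ q := pinner_pgrad ℓ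
  have hσsq : σ * σ = 1 := by rcases hσ with h | h <;> rw [h] <;> norm_num
  have hz'c : z' ∈ interior A ∪ frontier A := by
    rw [← closure_eq_interior_union_frontier, hA.closure_eq]; exact hz'A
  rcases hz'c with hint | hfro
  · exact ⟨0, by rw [frechetNCP_eq_zero_of_interior hint hv, zero_smul], by rw [mul_zero]⟩
  -- z' is a boundary point
  have hgz' : g z' = 0 := by
    have : z' ∈ frontier A ∩ U := ⟨hfro, hz'U⟩
    rw [hfr] at this; exact this.2
  have hstrict : HasStrictFDerivAt g ℓ z' :=
    (hgC1.contDiffAt (hU.mem_nhds hz'U)).hasStrictFDerivAt one_ne_zero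
  -- tangential directions
  have htang : ∀ w : ℝ × E, ℓ w = 0 → pinner v w = 0 := by
    intro w hw
    have hv' : v ∈ frechetNCP (frontier A) z' := frechetNCP_anti hA.frontier_subset z' hv
    have h1 := tangent_pinner_le hU hz'U hstrict (hsurj z' hz'U) hfr hgz' hv' hw
    have h2 := tangent_pinner_le hU hz'U hstrict (hsurj z' hz'U) hfr hgz' hv'
      (w := -w) (by simp [hw])
    have hneg : pinner v (-w) = -pinner v w := by
      have := pinner_smul_right v w (-1); simpa using this
    rw [hneg] at h2
    linarith
  -- inward directions
  have hinward : ∀ w : ℝ × E, 0 < σ * ℓ w → pinner v w ≤ 0 := by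
    intro w hw
    refine nonpos_of_forall_le_eps (norm_nonneg w) fun ε hε => ?_
    obtain ⟨δ, hδ, hp⟩ := hv ε hε
    set α : ℝ → ℝ × E := fun s => z' + s • w with hα
    have hline : HasDerivAt α w 0 := by
      have hlin : HasFDerivAt (fun s : ℝ => s • w)
          (ContinuousLinearMap.smulRight (1 : ℝ →L[ℝ] ℝ) w) 0 :=
        (ContinuousLinearMap.smulRight (1 : ℝ →L[ℝ] ℝ) w).hasFDerivAt
      have := (hlin.hasDerivAt).const_add z'
      simpa [hα] using this
    have hα0 : α 0 = z' := by simp [hα]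
    have hgd : HasDerivAt (fun s => σ * g (α s)) (σ * ℓ w) 0 := by
      have hpt : HasFDerivAt g ℓ (α 0) := hα0.symm ▸ hstrict.hasFDerivAt
      exact (hpt.comp_hasDerivAt 0 hline).const_mul σ
    have hslope : Filter.Tendsto (slope (fun s => σ * g (α s)) 0) (𝓝[>] (0:ℝ)) (𝓝 (σ * ℓ w)) :=
      (hasDerivAt_iff_tendsto_slope.1 hgd).mono_left
        (nhdsWithin_mono _ (fun s hs => ne_of_gt hs))
    have hev1 : ∀ᶠ s in 𝓝[>] (0:ℝ), 0 < slope (fun s => σ * g (α s)) 0 s :=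
      hslope.eventually (eventually_gt_nhds hw)
    have hev2 : ∀ᶠ s in 𝓝[>] (0:ℝ), α s ∈ V := by
      have : ∀ᶠ s in 𝓝 (0:ℝ), α s ∈ V :=
        (hline.continuousAt) (hVopen.mem_nhds (hα0 ▸ hz'V))
      exact this.filter_mono nhdsWithin_le_nhds
    have hev3 : ∀ᶠ s in 𝓝[>] (0:ℝ), ‖α s - z'‖ < δ := by
      have : Filter.Tendsto (fun s => ‖α s - z'‖) (𝓝 0) (𝓝 0) := by
        have := (hline.continuousAt.tendsto).sub (tendsto_const_nhds (x := z'))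
        rw [hα0] at this
        simpa using this.norm
      exact (this.eventually (eventually_lt_nhds hδ)).filter_mono nhdsWithin_le_nhds
    obtain ⟨s, ⟨⟨hslopepos, hαV⟩, hs2⟩, hsmem⟩ :=
      (((hev1.and hev2).and hev3).and self_mem_nhdsWithin).exists
    have hs4 : 0 < s := hsmem
    -- σ * g (α s) > 0 hence α s ∈ A
    have hgpos : 0 < σ * g (α s) := by
      have heq : slope (fun s => σ * g (α s)) 0 s = s⁻¹ * (σ * g (α s)) := by
        rw [slope_def_field, hα0, hgz', mul_zero, sub_zero, sub_zero, div_eq_inv_mul]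
      rw [heq] at hslopepos
      nlinarith [inv_pos.2 hs4]
    have hαA : α s ∈ A := hside (α s) hαV hgpos
    have hαz : α s - z' = s • w := by
      show z' + s • w - z' = s • w
      rw [add_sub_cancel_left]
    have := hp (α s) hαA hs2
    rw [hαz, pinner_smul_right, norm_smul, Real.norm_eq_abs, abs_of_pos hs4] at this
    rw [show s * pinner v w ≤ ε * (s * ‖w‖) ↔ s * pinner v w ≤ s * (ε * ‖w‖) by
      rw [show ε * (s * ‖w‖) = s * (ε * ‖w‖) by ring]] at this
    exact le_of_mul_le_mul_left this hs4
  -- combine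
  set c := pinner v n / pinner n n with hc
  have claimA : ∀ q : ℝ × E, pinner v q = c * pinner n q := by
    intro q
    set d := pinner n q / pinner n n with hd
    have hker : ℓ (q - d • n) = 0 := by
      rw [← hln, pinner_sub_right, pinner_smul_right, hd,
        div_mul_cancel₀ _ (ne_of_gt hnpos), sub_self]
    have h0 := htang _ hker
    rw [pinner_sub_right, pinner_smul_right, sub_eq_zero] at h0
    rw [h0, hd, hc, div_mul_eq_mul_div, div_mul_eq_mul_div, mul_comm]
  have hveq : v = c • n := by
    have hq : pinner (v - c • n) (v - c • n) = 0 := by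
      rw [pinner_sub_left, pinner_smul_left, claimA (v - c • n), sub_self]
    have := eq_zero_of_pinner_self_nonpos hq.le
    rwa [sub_eq_zero] at this
  have hsign : σ * pinner v n ≤ 0 := by
    have h1 : 0 < σ * ℓ (σ • n) := by
      rw [← hln, pinner_smul_right]
      calc (0:ℝ) < pinner n n := hnpos
        _ = σ * (σ * pinner n n) := by rw [← mul_assoc, hσsq, one_mul]
    have h2 := hinward (σ • n) h1
    rw [pinner_smul_right] at h2
    nlinarith [hσsq, h2]
  refine ⟨c, hveq, ?_⟩
  have : σ * c = (σ * pinner v n) / pinner n n := by rw [hc]; ring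
  rw [this]
  exact div_nonpos_of_nonpos_of_nonneg hsign hnpos.le

end Aux7
section Aux8

variable {E : Type*} [NormedAddCommGroup E] [InnerProductSpace ℝ E] [FiniteDimensional ℝ E]

omit [FiniteDimensional ℝ E] in
lemma limitingNCP_eq_zero_of_interior {A : Set (ℝ × E)} {z : ℝ × E} (hz : z ∈ interior A)
    {v : ℝ × E} (hv : v ∈ limitingNCP A z) : v = 0 := by
  obtain ⟨zs, vs, _, h2, h3, h4⟩ := hv
  have hev : ∀ᶠ i in atTop, zs i ∈ interior A :=
    h3.eventually (isOpen_interior.eventually_mem hz)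
  have hev2 : ∀ᶠ i in atTop, vs i = (fun _ => (0 : ℝ × E)) i :=
    hev.mono fun i hi => frechetNCP_eq_zero_of_interior hi (h2 i)
  have h5 : Filter.Tendsto (fun _ : ℕ => (0 : ℝ × E)) atTop (𝓝 v) := h4.congr' hev2
  exact tendsto_nhds_unique h5 tendsto_const_nhds

lemma limiting_ray {A U V : Set (ℝ × E)} (hA : IsClosed A) (hU : IsOpen U)
    {g : ℝ × E → ℝ} (hgC1 : ContDiffOn ℝ 1 g U)
    (hsurj : ∀ y ∈ U, (fderiv ℝ g y).range = ⊤)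
    (hfr : frontier A ∩ U = {y ∈ U | g y = 0})
    (hVopen : IsOpen V) (hVU : V ⊆ U) {σ : ℝ} (hσ : σ = 1 ∨ σ = -1)
    (hside : ∀ y ∈ V, 0 < σ * g y → y ∈ A)
    {z : ℝ × E} (hzV : z ∈ V)
    {v : ℝ × E} (hv : v ∈ limitingNCP A z) :
    ∃ c : ℝ, v = c • pgrad (fderiv ℝ g z) ∧ σ * c ≤ 0 := by
  have hzU : z ∈ U := hVU hzV
  set N : ℝ × E → ℝ × E := fun y => pgrad (fderiv ℝ g y) with hN
  set n := N z with hn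
  have hnpos : 0 < pinner n n := pinner_pgrad_self_pos (hsurj z hzU)
  have hcontN : ContinuousOn N U :=
    continuous_pgrad.comp_continuousOn (hgC1.continuousOn_fderiv_of_isOpen hU le_rfl)
  obtain ⟨zs, vs, h1, h2, h3, h4⟩ := hv
  have hevV : ∀ᶠ i in atTop, zs i ∈ V := h3.eventually (hVopen.eventually_mem hzV)
  set cs : ℕ → ℝ := fun i => pinner (vs i) (N (zs i)) / pinner (N (zs i)) (N (zs i)) with hcs
  have key : ∀ᶠ i in atTop, vs i = cs i • N (zs i) ∧ σ * cs i ≤ 0 := by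
    filter_upwards [hevV] with i hiV
    obtain ⟨c, hc1, hc2⟩ := frechet_ray hA hU hgC1 hsurj hfr hVopen hVU hσ hside
      (h1 i) hiV (h2 i)
    have hpn : 0 < pinner (N (zs i)) (N (zs i)) := pinner_pgrad_self_pos (hsurj _ (hVU hiV))
    have hcsi : cs i = c := by
      rw [hcs]
      simp only
      rw [hc1, pinner_smul_left, mul_div_assoc, div_self (ne_of_gt hpn), mul_one]
    rw [hcsi]
    exact ⟨hc1, hc2⟩
  have hevU : ∀ᶠ i in atTop, zs i ∈ U := hevV.mono fun i hi => hVU hi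
  have hzsU : Filter.Tendsto zs atTop (𝓝[U] z) := tendsto_nhdsWithin_iff.2 ⟨h3, hevU⟩
  have hNt : Filter.Tendsto (fun i => N (zs i)) atTop (𝓝 n) :=
    ((hcontN z hzU).tendsto).comp hzsU
  have ha : Filter.Tendsto (fun i => pinner (vs i) (N (zs i))) atTop (𝓝 (pinner v n)) :=
    (continuous_pinner.tendsto (v, n)).comp (h4.prodMk_nhds hNt)
  have hb : Filter.Tendsto (fun i => pinner (N (zs i)) (N (zs i))) atTop (𝓝 (pinner n n)) :=
    (continuous_pinner.tendsto (n, n)).comp (hNt.prodMk_nhds hNt)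
  set c := pinner v n / pinner n n with hc
  have hcst : Filter.Tendsto cs atTop (𝓝 c) := ha.div hb (ne_of_gt hnpos)
  have hveq : v = c • n := by
    have h5 : Filter.Tendsto vs atTop (𝓝 (c • n)) :=
      (hcst.smul hNt).congr' (key.mono fun i hi => hi.1.symm)
    exact tendsto_nhds_unique h4 h5
  refine ⟨c, hveq, ?_⟩
  exact le_of_tendsto (hcst.const_mul σ) (key.mono fun i hi => hi.2)

omit [FiniteDimensional ℝ E] in
/-- Convert a codimension-one chart with values in `EuclideanSpace ℝ (Fin 1)` into a
real-valued chart. -/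
lemma chart_to_real {M : Set (ℝ × E)} (hM : IsC1SubmanifoldCodim 1 M) {z : ℝ × E} (hz : z ∈ M) :
    ∃ U : Set (ℝ × E), IsOpen U ∧ z ∈ U ∧ ∃ g : ℝ × E → ℝ, ContDiffOn ℝ 1 g U ∧
      (∀ y ∈ U, (fderiv ℝ g y).range = ⊤) ∧ M ∩ U = {y ∈ U | g y = 0} := by
  obtain ⟨U, hU, hzU, f, hfC1, hfsurj, hMU⟩ := hM z hz
  set π : EuclideanSpace ℝ (Fin 1) →L[ℝ] ℝ := EuclideanSpace.proj 0 with hπ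
  have hπsurj : Function.Surjective π := by
    intro cval
    exact ⟨EuclideanSpace.single 0 cval, by simp [hπ]⟩
  have hzero : ∀ x : EuclideanSpace ℝ (Fin 1), π x = 0 → x = 0 := by
    intro x hx
    ext i
    rw [Subsingleton.elim i 0]
    exact hx
  refine ⟨U, hU, hzU, fun y => π (f y), π.contDiff.comp_contDiffOn hfC1, ?_, ?_⟩
  · intro y hyU
    have hdf : HasFDerivAt f (fderiv ℝ f y) y :=
      ((hfC1.contDiffAt (hU.mem_nhds hyU)).differentiableAt one_ne_zero).hasFDerivAt
    have hcomp : HasFDerivAt (fun y => π (f y)) (π.comp (fderiv ℝ f y)) y :=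
      π.hasFDerivAt.comp y hdf
    rw [hcomp.fderiv]
    apply LinearMap.range_eq_top.2
    have hfsurj' : Function.Surjective ⇑(fderiv ℝ f y) := by
      have := hfsurj y hyU
      rwa [fderivWithin_of_isOpen hU hyU] at this
    exact hπsurj.comp hfsurj'
  · rw [hMU]
    ext y
    simp only [Set.mem_setOf_eq]
    refine and_congr_right fun _ => ⟨fun h => by rw [h, map_zero], fun h => hzero _ h⟩

end Aux8

theorem statement7 {E : Type*} [NormedAddCommGroup E] [InnerProductSpace ℝ E]
    [FiniteDimensional ℝ E] (S : ℝ → Set E) (hS : SmoothSweepingProcess S)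
    (t : ℝ) (x : E) (hx : x ∈ S t)
    (h : (∃ c : ℕ, 1 ≤ c ∧ IsC1SubmanifoldCodim c (sgraph S)) ∨ 0 < asymMod S t x) :
    asymMod S t x = symMod S t x := by
  have hz : (t, x) ∈ sgraph S := hx
  rcases h with hman | hpos
  · obtain ⟨c, _, hc⟩ := hman
    exact asymMod_eq_symMod_of_neg_mem fun p hp => limitingNCP_neg_of_submanifold hc hp
  rcases hS.2.2 with hman | ⟨hreg, hbd⟩
  · obtain ⟨c, _, hc⟩ := hman
    exact asymMod_eq_symMod_of_neg_mem fun p hp => limitingNCP_neg_of_submanifold hc hp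
  -- boundary case
  set A := sgraph S with hAdef
  have hA : IsClosed A := hS.1
  have hzfr : (t, x) ∈ frontier A := by
    by_contra hcon
    have hzint : (t, x) ∈ interior A := by
      have hcl : (t, x) ∈ closure A := subset_closure hz
      rw [closure_eq_interior_union_frontier] at hcl
      exact hcl.resolve_right hcon
    have hmod0 : asymMod S t x = 0 := by
      refine le_antisymm ?_ zero_le
      refine iSup_le fun u => iSup_le fun hu => iSup_le fun a => iSup_le fun ha => ?_
      have h0 : ((a : ℝ), -u) = 0 := limitingNCP_eq_zero_of_interior hzint ha
      have ha0 : a = 0 := congrArg Prod.fst h0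
      rw [ha0]
      simp
    rw [hmod0] at hpos
    exact lt_irrefl 0 hpos
  obtain ⟨U, hU, hzU, g, hgC1, hsurj, hfr⟩ := chart_to_real hbd hzfr
  have hstrict : HasStrictFDerivAt g (fderiv ℝ g (t, x)) (t, x) :=
    (hgC1.contDiffAt (hU.mem_nhds hzU)).hasStrictFDerivAt one_ne_zero
  obtain ⟨V, hVopen, hzV, hVU, σ, hσ, hside⟩ :=
    exists_side hA hreg hzfr hU hzU hstrict (hsurj _ hzU) hfr
  have hσsq : σ * σ = 1 := by rcases hσ with h' | h' <;> rw [h'] <;> norm_num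
  -- extract a positive coderivative element
  have hex : ∃ u₀ : E, ‖u₀‖ ≤ 1 ∧ ∃ a₀, a₀ ∈ coderiv S t x u₀ ∧ 0 < a₀ := by
    by_contra hno
    push_neg at hno
    have hle : asymMod S t x ≤ 0 := by
      refine iSup_le fun u => iSup_le fun hu => iSup_le fun a => iSup_le fun ha => ?_
      rw [ENNReal.ofReal_eq_zero.2 (hno u hu a ha)]
    rw [le_zero_iff] at hle
    rw [hle] at hpos
    exact lt_irrefl 0 hpos
  obtain ⟨u₀, hu₀, a₀, ha₀, ha₀pos⟩ := hex
  set n := pgrad (fderiv ℝ g (t, x)) with hn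
  obtain ⟨c₀, hc₀eq, hc₀sign⟩ :=
    limiting_ray hA hU hgC1 hsurj hfr hVopen hVU hσ hside hzV ha₀
  have ha₀n : a₀ = c₀ * n.1 := by
    have := congrArg Prod.fst hc₀eq
    simpa [Prod.smul_fst, smul_eq_mul] using this
  apply asymMod_eq_symMod_of_nonneg
  intro u hu a ha
  obtain ⟨c, hceq, hcsign⟩ :=
    limiting_ray hA hU hgC1 hsurj hfr hVopen hVU hσ hside hzV ha
  have han : a = c * n.1 := by
    have := congrArg Prod.fst hceq
    simpa [Prod.smul_fst, smul_eq_mul] using this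
  -- sign bookkeeping
  have hcc : 0 ≤ c * c₀ := by
    have hprod : 0 ≤ (σ * c) * (σ * c₀) := by nlinarith [hcsign, hc₀sign]
    calc (0:ℝ) ≤ (σ * c) * (σ * c₀) := hprod
      _ = (σ * σ) * (c * c₀) := by ring
      _ = c * c₀ := by rw [hσsq, one_mul]
  have haa : 0 ≤ a * a₀ := by
    calc (0:ℝ) ≤ (c * c₀) * (n.1 * n.1) := mul_nonneg hcc (mul_self_nonneg _)
      _ = a * a₀ := by rw [han, ha₀n]; ring
  nlinarith [ha₀pos, haa]
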